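/- Let ψ ∈ Ψ, let m, d ∈ ℕ, and let μ̄ ∈ Λ^𝒞 be an (m+2d)-regular quasi-admissible tuple. Then the quasi-admissible tuple ν̄ := μ̄ − d·ē_ψ is m-regular. -/

import Mathlib

open scoped Classical

noncomputable section

/-- A (reduced, crystallographic) root system `Φ` in the dual of a real vector space `V`,
together with a chosen coroot `α̌ ∈ V` for every root `α`. -/
structure RootSystemData (V : Type*) [AddCommGroup V] [Module ℝ V] where
  roots : Set (Module.Dual ℝ V)
  coroot : Module.Dual ℝ V → V
  finite : roots.Finite
  ne_zero : ∀ α ∈ roots, α ≠ 0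
  root_coroot_two : ∀ α ∈ roots, α (coroot α) = 2
  reflect_mem : ∀ α ∈ roots, ∀ β ∈ roots, β - β (coroot α) • α ∈ roots
  crystallographic : ∀ α ∈ roots, ∀ β ∈ roots, ∃ n : ℤ, β (coroot α) = (n : ℝ)
  reduced : ∀ α ∈ roots, ∀ c : ℝ, c • α ∈ roots → c = 1 ∨ c = -1
  span_top : Submodule.span ℝ roots = ⊤

section
variable {V : Type*} [AddCommGroup V] [Module ℝ V]

/-- The simple elements of a positive system `P`: elements which are not sums of two
elements of `P`. -/
def simplesOf (P : Set (Module.Dual ℝ V)) : Set (Module.Dual ℝ V) :=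
  {α | α ∈ P ∧ ¬∃ β ∈ P, ∃ γ ∈ P, α = β + γ}

/-- The affine root `(α, n)` viewed as the affine function `x ↦ α(x) + n`. -/
def aev (α : Module.Dual ℝ V) (n : ℤ) : V → ℝ := fun x => α x + (n : ℝ)

/-- `π : W̃ → Λ`, `w ↦ w(0)`. -/
def piL (w : Equiv.Perm V) : V := w 0

/-- Translation by `μ`, as an element of the group of permutations of `V`. -/
def transl (μ : V) : Equiv.Perm V := Equiv.addLeft μ

end

namespace RootSystemData

variable {V : Type*} [AddCommGroup V] [Module ℝ V]

variable (RS : RootSystemData V)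

/-- A point is regular if it lies on no root hyperplane. -/
def IsRegularPt (x : V) : Prop := ∀ α ∈ RS.roots, α x ≠ 0

/-- Weyl chambers of `Φ`: connected components of the set of regular points,
described by the strict sign pattern of a regular point. -/
def IsChamber (C : Set V) : Prop :=
  ∃ v, RS.IsRegularPt v ∧ C = {x | ∀ α ∈ RS.roots, 0 < α v → 0 < α x}

/-- The type `𝒞` of Weyl chambers. -/
abbrev ChamberT := {C : Set V // RS.IsChamber C}

/-- The set `Φ_C` of `C`-positive roots. -/
def pos (C : Set V) : Set (Module.Dual ℝ V) := {α | α ∈ RS.roots ∧ ∀ x ∈ C, 0 < α x}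


/-- The set `Δ_C` of `C`-simple roots. -/
def simples (C : Set V) : Set (Module.Dual ℝ V) := simplesOf (RS.pos C)

/-- The affine reflection `s_{(α,n)} : x ↦ x − (α(x)+n) • α̌`. -/
def sAff (α : Module.Dual ℝ V) (n : ℤ) : Equiv.Perm V :=
  if h : α (RS.coroot α) = 2 then
    Function.Involutive.toPerm (fun x => x - (α x + (n : ℝ)) • RS.coroot α) (by
      intro x
      simp only [map_sub, map_smul, smul_eq_mul, h]
      match_scalars <;> ring)
  else Equiv.refl V


/-- Positivity of an affine function `f` (which is required to be an affine root
`(α,n)`), relative to a positive system `P ⊂ Φ`:  `n > 0`, or `n = 0 ∧ α ∈ P`. -/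
def IsPosAff (P : Set (Module.Dual ℝ V)) (f : V → ℝ) : Prop :=
  ∃ α ∈ RS.roots, ∃ n : ℤ, f = aev α n ∧ (0 < n ∨ (n = 0 ∧ α ∈ P))

/-- The subgroup of the affine Weyl group generated by the reflections `s_{(α,n)}`
with `α ∈ Φ ∩ Φ'`. -/
def affWeylOf (Φ' : Set (Module.Dual ℝ V)) : Subgroup (Equiv.Perm V) :=
  Subgroup.closure {g | ∃ α ∈ RS.roots ∩ Φ', ∃ n : ℤ, g = RS.sAff α n}

/-- The affine Weyl group `W̃ = W ⋉ Λ`, realized as the group generated by all affine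
reflections `s_{(α,n)}`. -/
def affWeyl : Subgroup (Equiv.Perm V) := RS.affWeylOf Set.univ

/-- The finite Weyl group `W`, generated by the linear reflections `s_α = s_{(α,0)}`. -/
def weyl : Subgroup (Equiv.Perm V) :=
  Subgroup.closure {g | ∃ α ∈ RS.roots, g = RS.sAff α 0}

/-- The subgroup `W̃_α` generated by the reflections `s_{(α,n)}`, `n ∈ ℤ`. -/
def reflSubgroup (α : Module.Dual ℝ V) : Subgroup (Equiv.Perm V) :=
  Subgroup.closure {g | ∃ n : ℤ, g = RS.sAff α n}


/-- The coroot lattice `Λ ⊂ V`. -/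
def corootLattice : AddSubgroup V := AddSubgroup.closure (RS.coroot '' RS.roots)


/-- The (open) fundamental alcove `A₀ ⊂ C₀`, whose closure contains `0`. -/
def alcove (C₀ : Set V) : Set V := {x | ∀ α ∈ RS.pos C₀, 0 < α x ∧ α x < 1}

/-- `w ∈ C`, i.e. `w(A₀) ⊂ C`. -/
def MemC (C₀ : Set V) (w : Equiv.Perm V) (C : Set V) : Prop :=
  ∀ x ∈ RS.alcove C₀, w x ∈ C

/-- The inversion set of `w`: positive affine roots `f` with `w⁻¹(f) = f ∘ w`
negative. -/
def invSet (P : Set (Module.Dual ℝ V)) (w : Equiv.Perm V) : Set (V → ℝ) :=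
  {f | RS.IsPosAff P f ∧ ¬ RS.IsPosAff P (fun x => f (w x))}

/-- The length function `l` on `W̃` determined by the fundamental alcove:
the number of inversions. -/
def len (C₀ : Set V) (w : Equiv.Perm V) : ℕ := (RS.invSet (RS.pos C₀) w).ncard

/-- The (strict) Bruhat order on `W̃`: the transitive closure of
`x < s_{(α,n)} x` whenever the length increases. -/
def bruhatLT (C₀ : Set V) : Equiv.Perm V → Equiv.Perm V → Prop :=
  Relation.TransGen (fun x y =>
    (∃ α ∈ RS.roots, ∃ n : ℤ, y = RS.sAff α n * x) ∧ RS.len C₀ x < RS.len C₀ y)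

/-- The Bruhat order `≤` on `W̃`. -/
def bruhatLE (C₀ : Set V) (x y : Equiv.Perm V) : Prop := x = y ∨ RS.bruhatLT C₀ x y

/-- One step of the ordering `<_{Φ'}`:  `x = s_{(α,n)} y <_{(α,n)} y` with `α ∈ Φ'`,
i.e. `y⁻¹((α,n)) > 0` (positivity of affine roots relative to `P`). -/
def stepRel (P Φ' : Set (Module.Dual ℝ V)) (x y : Equiv.Perm V) : Prop :=
  ∃ α ∈ RS.roots ∩ Φ', ∃ n : ℤ,
    x = RS.sAff α n * y ∧ RS.IsPosAff P (fun v => aev α n (y v))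

/-- The ordering `<_{Φ'}` on `W̃` (with affine-root positivity relative to `P`). -/
def ordLT (P Φ' : Set (Module.Dual ℝ V)) : Equiv.Perm V → Equiv.Perm V → Prop :=
  Relation.TransGen (RS.stepRel P Φ')

/-- The ordering `≤_{Φ'}` on `W̃`. -/
def ordLE (P Φ' : Set (Module.Dual ℝ V)) (x y : Equiv.Perm V) : Prop :=
  x = y ∨ RS.ordLT P Φ' x y

/-- The ordering `<_{Φ'}` on `V`: `x <_{Φ'} y` iff `y − x` is a positive linear
combination of coroots `α̌` with `α ∈ Φ'`. -/
def vecLT (Φ' : Set (Module.Dual ℝ V)) (x y : V) : Prop :=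
  ∃ s : Finset (Module.Dual ℝ V), ∃ c : Module.Dual ℝ V → ℝ,
    s.Nonempty ∧ (∀ α ∈ s, α ∈ RS.roots ∩ Φ' ∧ 0 < c α) ∧
      y - x = ∑ α ∈ s, c α • RS.coroot α

/-- The ordering `≤_{Φ'}` on `V`. -/
def vecLE (Φ' : Set (Module.Dual ℝ V)) (x y : V) : Prop := x = y ∨ RS.vecLT Φ' x y

/-- `ψ` is the fundamental weight of the chamber `C` corresponding to the simple root
`α ∈ Δ_C`:  `⟨ψ, β̌⟩ = δ_{αβ}` for `β ∈ Δ_C`. -/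
def PairsIn (C : Set V) (ψ α : Module.Dual ℝ V) : Prop :=
  α ∈ RS.simples C ∧ ∀ β ∈ RS.simples C, ψ (RS.coroot β) = if β = α then 1 else 0

/-- `ψv` is the fundamental coweight of the chamber `C` corresponding to the simple
root `α ∈ Δ_C`:  `⟨β, ψv⟩ = δ_{αβ}` for `β ∈ Δ_C`. -/
def CoPairsIn (C : Set V) (α : Module.Dual ℝ V) (ψv : V) : Prop :=
  α ∈ RS.simples C ∧ ∀ β ∈ RS.simples C, β ψv = if β = α then 1 else 0

/-- `ψ ∈ Ψ_C` with corresponding fundamental coweight `ψ̌ = ψv`. -/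
def IsFundPair (C : Set V) (ψ : Module.Dual ℝ V) (ψv : V) : Prop :=
  ∃ α, RS.PairsIn C ψ α ∧ RS.CoPairsIn C α ψv

/-- `ψ ∈ Ψ_C`. -/
def IsFundWeightOf (C : Set V) (ψ : Module.Dual ℝ V) : Prop := ∃ α, RS.PairsIn C ψ α

/-- `Φ(ψ) = {α ∈ Φ : ⟨α, ψ̌⟩ ≥ 0}` (described via the coweight `ψv = ψ̌`). -/
def phiNonneg (ψv : V) : Set (Module.Dual ℝ V) := {α | α ∈ RS.roots ∧ 0 ≤ α ψv}

/-- `Φ^ψ = {α ∈ Φ : ⟨α, ψ̌⟩ = 0}` (described via the coweight `ψv = ψ̌`). -/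
def phiZero (ψv : V) : Set (Module.Dual ℝ V) := {α | α ∈ RS.roots ∧ α ψv = 0}

/-- The set `W̃_ψ` of `w ∈ W̃` with `w⁻¹(Φ̃^ψ_{>0}) ⊂ Φ̃_{>0}`; here `Φψ = Φ^ψ`,
`P` is the chosen positive system of `Φ^ψ` and `C₀` determines `Φ̃_{>0}`. -/
def WpsiSet (C₀ : Set V) (Φψ P : Set (Module.Dual ℝ V)) : Set (Equiv.Perm V) :=
  {w | ∀ α ∈ RS.roots ∩ Φψ, ∀ n : ℤ, (0 < n ∨ (n = 0 ∧ α ∈ P)) →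
      RS.IsPosAff (RS.pos C₀) (fun v => aev α n (w v))}

/-- Admissibility of a tuple `w̄ ∈ W̃^𝒞`: `w_{s_α(C)} ≤_α w_C` for all `C ∈ 𝒞`,
`α ∈ Δ_C`. -/
def AdmissibleW (C₀ : Set V) (w : RS.ChamberT → Equiv.Perm V) : Prop :=
  ∀ C : RS.ChamberT, ∀ α ∈ RS.simples C.1, ∀ C' : RS.ChamberT,
    C'.1 = ⇑(RS.sAff α 0) '' C.1 → RS.ordLE (RS.pos C₀) {α} (w C') (w C)

/-- Quasi-admissibility of a tuple `w̄ ∈ W̃^𝒞`: `w_{s_α(C)} ∈ W̃_α w_C`. -/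
def QuasiAdmissibleW (w : RS.ChamberT → Equiv.Perm V) : Prop :=
  ∀ C : RS.ChamberT, ∀ α ∈ RS.simples C.1, ∀ C' : RS.ChamberT,
    C'.1 = ⇑(RS.sAff α 0) '' C.1 → ∃ u ∈ RS.reflSubgroup α, w C' = u * w C

/-- Admissibility of a tuple `μ̄ ∈ V^𝒞`: `μ_C − μ_{s_α(C)} ∈ ℝ_{≥0} α̌`. -/
def AdmissibleV (μ : RS.ChamberT → V) : Prop :=
  ∀ C : RS.ChamberT, ∀ α ∈ RS.simples C.1, ∀ C' : RS.ChamberT,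
    C'.1 = ⇑(RS.sAff α 0) '' C.1 → ∃ c : ℝ, 0 ≤ c ∧ μ C - μ C' = c • RS.coroot α

/-- Quasi-admissibility of a tuple `μ̄ ∈ V^𝒞`: `μ_C − μ_{s_α(C)} ∈ ℝ α̌`. -/
def QuasiAdmissibleV (μ : RS.ChamberT → V) : Prop :=
  ∀ C : RS.ChamberT, ∀ α ∈ RS.simples C.1, ∀ C' : RS.ChamberT,
    C'.1 = ⇑(RS.sAff α 0) '' C.1 → ∃ c : ℝ, μ C - μ C' = c • RS.coroot α

/-- `m`-regularity of a tuple `μ̄ ∈ V^𝒞`: `⟨α, μ_C⟩ ≥ m` for every `C ∈ 𝒞` and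
`α ∈ Φ_C`. -/
def RegularVAt (m : ℝ) (μ : RS.ChamberT → V) : Prop :=
  ∀ C : RS.ChamberT, ∀ α ∈ RS.pos C.1, m ≤ α (μ C)

/-- `m`-regularity of a tuple `w̄ ∈ W̃^𝒞`. -/
def RegularWAt (m : ℝ) (w : RS.ChamberT → Equiv.Perm V) : Prop :=
  RS.RegularVAt m (fun C => piL (w C))

/-- Regularity of a tuple `μ̄ ∈ V^𝒞`. -/
def RegularV (μ : RS.ChamberT → V) : Prop := ∃ m : ℝ, 0 < m ∧ RS.RegularVAt m μ

/-- Regularity of a tuple `w̄ ∈ W̃^𝒞`. -/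
def RegularW (w : RS.ChamberT → Equiv.Perm V) : Prop := ∃ m : ℝ, 0 < m ∧ RS.RegularWAt m w

/-- `e` is the quasi-admissible tuple `ē_ψ` corresponding to the standard basis vector
`e_ψ ∈ ℤ^Ψ`:  `(ē_ψ)_C = α̌` if `α ∈ Δ_C` corresponds to `ψ ∈ Ψ_C`, and `= 0` if
`ψ ∉ Ψ_C`. -/
def IsEPsiTuple (ψ : Module.Dual ℝ V) (e : RS.ChamberT → V) : Prop :=
  ∀ C : RS.ChamberT,
    (∀ α, RS.PairsIn C.1 ψ α → e C = RS.coroot α) ∧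
      ((¬∃ α, RS.PairsIn C.1 ψ α) → e C = 0)

end RootSystemData

/-!
Let `α ∈ Δ_C` be the simple root dual to `ψ`, so that `ν_C = μ_C - d α̌` (and `ν_C = μ_C` when
`ψ ∉ Ψ_C`). For a `C`-positive root `β` with `⟨β, α̌⟩ ≤ 2` we get `⟨β, ν_C⟩ ≥ m + 2d - 2d`
directly. Otherwise `β` is not simple, because distinct simple roots pair non-positively: if
`⟨β, α̌⟩ > 0` then `β - α` is a root, and according to its sign it splits `α` or `β` as a sum
of two positive roots. So `β = β₁ + β₂` with `β₁, β₂` positive, and by induction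
`⟨β, ν_C⟩ ≥ 2m ≥ m`.
-/

namespace RootSystemData

variable {V : Type*} [AddCommGroup V] [Module ℝ V] (RS : RootSystemData V)

instance : Finite RS.roots := RS.finite.to_subtype

lemma neg_mem {α : Module.Dual ℝ V} (hα : α ∈ RS.roots) : -α ∈ RS.roots := by
  have h := RS.reflect_mem α hα α hα
  rwa [RS.root_coroot_two α hα, two_smul, sub_add_cancel_left] at h

lemma coroot_injOn : Set.InjOn RS.coroot RS.roots := by
  intro α hα β hβ h
  have : IsAddTorsionFree (Module.Dual ℝ V) := .of_isTorsionFree ℝ _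
  have hβα : β (RS.coroot α) = 2 := h ▸ RS.root_coroot_two β hβ
  exact Module.eq_of_mapsTo_reflection_of_mem (f := Module.Dual.eval ℝ V (RS.coroot α))
    (g := Module.Dual.eval ℝ V (RS.coroot α)) RS.finite (RS.root_coroot_two α hα) hβα
    (RS.root_coroot_two α hα) hβα (fun γ hγ => RS.reflect_mem α hα γ hγ)
    (fun γ hγ => h ▸ RS.reflect_mem β hβ γ hγ) hβ

section Chamber

variable {RS} {C : Set V}

lemma IsChamber.nonempty (hC : RS.IsChamber C) : C.Nonempty := by
  obtain ⟨v, -, rfl⟩ := hC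
  exact ⟨v, fun _ _ h => h⟩

lemma mem_pos_or_neg_mem_pos (hC : RS.IsChamber C) {γ : Module.Dual ℝ V}
    (hγ : γ ∈ RS.roots) : γ ∈ RS.pos C ∨ -γ ∈ RS.pos C := by
  obtain ⟨v, hv, rfl⟩ := hC
  rcases (hv γ hγ).lt_or_gt with h | h
  · exact .inr ⟨RS.neg_mem hγ, fun x hx => hx _ (RS.neg_mem hγ) (by simpa using h)⟩
  · exact .inl ⟨hγ, fun x hx => hx γ hγ h⟩

/-- Terminates because `β₁` and `β₂` are smaller than `β = β₁ + β₂` at any point of `C`. -/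
theorem pos_induction (hC : C.Nonempty) {p : Module.Dual ℝ V → Prop}
    (step : ∀ β ∈ RS.pos C,
      (∀ β₁ ∈ RS.pos C, ∀ β₂ ∈ RS.pos C, β = β₁ + β₂ → p β₁ ∧ p β₂) → p β) :
    ∀ β ∈ RS.pos C, p β := by
  obtain ⟨v, hv⟩ := hC
  let r : Module.Dual ℝ V → Module.Dual ℝ V → Prop := fun γ β => γ v < β v
  have : IsStrictOrder _ r := { irrefl := fun _ => lt_irrefl _, trans := fun _ _ _ => lt_trans }
  have hwf : (RS.pos C).WellFoundedOn r := (RS.finite.subset fun _ h => h.1).wellFoundedOn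
  refine fun β hβ => hwf.induction hβ fun β hβ ih => ?_
  refine step β hβ fun β₁ h₁ β₂ h₂ hsum => ⟨ih β₁ h₁ ?_, ih β₂ h₂ ?_⟩ <;>
    simp only [r, hsum, LinearMap.add_apply] <;> linarith [h₁.2 v hv, h₂.2 v hv]

end Chamber

section FiniteDimensional

variable [FiniteDimensional ℝ V]

def toRootPairing : RootPairing RS.roots ℝ (Module.Dual ℝ V) V :=
  RootPairing.mk'' LinearMap.id (Function.Embedding.subtype _)
    ⟨fun α => RS.coroot α, fun α β h => Subtype.ext (RS.coroot_injOn α.2 β.2 h)⟩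
    (fun α => RS.root_coroot_two α α.2)
    (by
      rintro α - ⟨γ, rfl⟩
      exact ⟨⟨_, RS.reflect_mem α α.2 γ γ.2⟩, rfl⟩)
    (by simpa using RS.span_top)

lemma toRootPairing_pairing (α β : RS.roots) :
    RS.toRootPairing.pairing α β = (α : Module.Dual ℝ V) (RS.coroot β) := rfl

instance : RS.toRootPairing.IsCrystallographic where
  exists_value α β := by
    obtain ⟨n, hn⟩ := RS.crystallographic β β.2 α α.2
    exact ⟨n, by rw [toRootPairing_pairing, hn]; rfl⟩

lemma sub_mem_roots_of_apply_coroot_pos {α β : Module.Dual ℝ V} (hα : α ∈ RS.roots)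
    (hβ : β ∈ RS.roots) (hne : β ≠ α) (hpos : 0 < β (RS.coroot α)) : β - α ∈ RS.roots := by
  have hpos' : 0 < RS.toRootPairing.pairingIn ℤ ⟨β, hβ⟩ ⟨α, hα⟩ := by
    have := RS.toRootPairing.algebraMap_pairingIn ℤ ⟨β, hβ⟩ ⟨α, hα⟩
    rw [toRootPairing_pairing, algebraMap_int_eq, eq_intCast] at this
    exact_mod_cast this ▸ hpos
  obtain ⟨γ, hγ⟩ := RS.toRootPairing.root_sub_root_mem_of_pairingIn_pos hpos'
    (fun h => hne (congrArg Subtype.val h))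
  exact hγ ▸ γ.2

variable {RS} {C : Set V}

lemma apply_coroot_nonpos_of_mem_simples (hC : RS.IsChamber C) {α β : Module.Dual ℝ V}
    (hα : α ∈ RS.simples C) (hβ : β ∈ RS.simples C) (hne : β ≠ α) :
    β (RS.coroot α) ≤ 0 := by
  by_contra! hpos
  have hsub := RS.sub_mem_roots_of_apply_coroot_pos hα.1.1 hβ.1.1 hne hpos
  rcases mem_pos_or_neg_mem_pos hC hsub with h | h
  · exact hβ.2 ⟨β - α, h, α, hα.1, (sub_add_cancel β α).symm⟩
  · rw [neg_sub] at h
    exact hα.2 ⟨α - β, h, β, hβ.1, (sub_add_cancel α β).symm⟩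

lemma apply_coroot_le_two_of_mem_simples (hC : RS.IsChamber C) {α β : Module.Dual ℝ V}
    (hα : α ∈ RS.simples C) (hβ : β ∈ RS.simples C) : β (RS.coroot α) ≤ 2 := by
  obtain rfl | hne := eq_or_ne β α
  · exact (RS.root_coroot_two β hα.1.1).le
  · linarith [apply_coroot_nonpos_of_mem_simples hC hα hβ hne]

lemma le_apply_sub_smul_coroot (hC : RS.IsChamber C) {α : Module.Dual ℝ V}
    (hα : α ∈ RS.simples C) {u : V} {m d : ℝ} (hm : 0 ≤ m) (hd : 0 ≤ d)
    (hu : ∀ γ ∈ RS.pos C, m + 2 * d ≤ γ u) :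
    ∀ β ∈ RS.pos C, m ≤ β (u - d • RS.coroot α) := by
  refine pos_induction hC.nonempty fun β hβ ih => ?_
  by_cases hle : β (RS.coroot α) ≤ 2
  · simp only [map_sub, map_smul, smul_eq_mul]
    nlinarith [hu β hβ]
  · obtain ⟨β₁, h₁, β₂, h₂, rfl⟩ : ∃ β₁ ∈ RS.pos C, ∃ β₂ ∈ RS.pos C, β = β₁ + β₂ := by
      by_contra hsimple
      exact hle (apply_coroot_le_two_of_mem_simples hC hα ⟨hβ, hsimple⟩)
    obtain ⟨ih₁, ih₂⟩ := ih β₁ h₁ β₂ h₂ rfl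
    rw [LinearMap.add_apply]
    linarith

end FiniteDimensional

end RootSystemData

theorem stmt16_general {V : Type*} [AddCommGroup V] [Module ℝ V] [FiniteDimensional ℝ V]
    (RS : RootSystemData V)
    (ψ : Module.Dual ℝ V)
    (m d : ℕ)
    (μ : RS.ChamberT → V)
    (hreg : RS.RegularVAt ((m : ℝ) + 2 * d) μ)
    (e : RS.ChamberT → V) (he : RS.IsEPsiTuple ψ e) :
    RS.RegularVAt (m : ℝ) (fun C => μ C - (d : ℝ) • e C) := by
  intro C β hβ
  dsimp only
  by_cases hψC : ∃ α, RS.PairsIn C.1 ψ α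
  · obtain ⟨α, hα⟩ := hψC
    rw [(he C).1 α hα]
    exact RootSystemData.le_apply_sub_smul_coroot C.2 hα.1 m.cast_nonneg d.cast_nonneg
      (hreg C) β hβ
  · rw [(he C).2 hψC, smul_zero, sub_zero]
    linarith [hreg C β hβ, d.cast_nonneg (α := ℝ)]

/-- Claim 2.13(b): for `ψ ∈ Ψ`, `m, d ∈ ℕ` and an `(m+2d)`-regular
quasi-admissible tuple `μ̄ ∈ Λ^𝒞`, the quasi-admissible tuple `ν̄ = μ̄ − d·ē_ψ` is
`m`-regular. -/
theorem stmt16 {V : Type*} [AddCommGroup V] [Module ℝ V] [FiniteDimensional ℝ V]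
    (RS : RootSystemData V)
    (ψ : Module.Dual ℝ V) (ψv : V) (hψ : ∃ C : RS.ChamberT, RS.IsFundPair C.1 ψ ψv)
    (m d : ℕ)
    (μ : RS.ChamberT → V) (hμΛ : ∀ C, μ C ∈ RS.corootLattice)
    (hq : RS.QuasiAdmissibleV μ) (hreg : RS.RegularVAt ((m : ℝ) + 2 * d) μ)
    (e : RS.ChamberT → V) (he : RS.IsEPsiTuple ψ e) :
    RS.RegularVAt (m : ℝ) (fun C => μ C - (d : ℝ) • e C) :=
  stmt16_general RS ψ m d μ hreg e he
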